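/- The chromatic number of the Moser spindle (as a unit distance graph on 7 vertices) equals 4. -/
import Mathlib

/-- The Moser spindle as an abstract graph on 7 vertices: vertex `0` is the common hub,
`1,2,3` and `4,5,6` are the two unit rhombi (`3` and `6` the far tips, joined by the
tip edge), edges corresponding exactly to the 11 unit distances. -/
def moserSpindle : SimpleGraph (Fin 7) :=
  SimpleGraph.fromRel (fun i j =>
    (i, j) ∈ ([(0,1), (0,2), (1,2), (1,3), (2,3),
               (0,4), (0,5), (4,5), (4,6), (5,6), (3,6)] : List (Fin 7 × Fin 7)))

set_option maxHeartbeats 1000000 in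
set_option synthInstance.maxSize 2000 in
set_option synthInstance.maxHeartbeats 1000000 in
lemma moser_keydec : ∀ a b c d e x y : Fin 3,
    ¬ (a ≠ b ∧ a ≠ c ∧ b ≠ c ∧ b ≠ d ∧ c ≠ d ∧ a ≠ e ∧ a ≠ x ∧ e ≠ x ∧ e ≠ y ∧ x ≠ y ∧ d ≠ y) := by
  decide

lemma moser_adjL (p : Fin 7 × Fin 7) (hp : p ∈ ([(0,1), (0,2), (1,2), (1,3), (2,3),
               (0,4), (0,5), (4,5), (4,6), (5,6), (3,6)] : List (Fin 7 × Fin 7))) :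
    moserSpindle.Adj p.1 p.2 :=
  SimpleGraph.fromRel_adj .. |>.2 ⟨by fin_cases hp <;> decide, Or.inl hp⟩

lemma moser_col4 : moserSpindle.Colorable 4 := by
  refine ⟨SimpleGraph.Coloring.mk (![0,1,2,3,1,2,0] : Fin 7 → Fin 4) ?_⟩
  intro a b hab
  have h := (SimpleGraph.fromRel_adj .. |>.1 hab).2
  fin_cases a <;> fin_cases b <;> simp_all <;> decide

lemma moser_notcol3 : ¬ moserSpindle.Colorable 3 := by
  rintro ⟨c⟩
  have h : ∀ p ∈ ([(0,1), (0,2), (1,2), (1,3), (2,3),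
               (0,4), (0,5), (4,5), (4,6), (5,6), (3,6)] : List (Fin 7 × Fin 7)), c p.1 ≠ c p.2 :=
    fun p hp => c.valid (moser_adjL p hp)
  exact moser_keydec (c 0) (c 1) (c 2) (c 3) (c 4) (c 5) (c 6)
    ⟨h (0,1) (by simp), h (0,2) (by simp), h (1,2) (by simp), h (1,3) (by simp),
     h (2,3) (by simp), h (0,4) (by simp), h (0,5) (by simp), h (4,5) (by simp),
     h (4,6) (by simp), h (5,6) (by simp), h (3,6) (by simp)⟩

/-- the chromatic number of the Moser spindle equals 4. -/
theorem stmt_7 : moserSpindle.chromaticNumber = 4 := by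
  have h1 := moser_col4.chromaticNumber_le
  have h2 : ¬ moserSpindle.chromaticNumber ≤ 3 := by
    rw [show ((3:ℕ∞)) = ((3:ℕ):ℕ∞) by norm_num, SimpleGraph.chromaticNumber_le_iff_colorable]
    exact moser_notcol3
  push_neg at h2
  have h3 : ((4:ℕ):ℕ∞) ≤ moserSpindle.chromaticNumber := by
    exact_mod_cast Order.add_one_le_of_lt h2
  exact le_antisymm (by exact_mod_cast h1) (by exact_mod_cast h3)
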